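/- Let R be a semiperfect ring and M a right R-module. If M is hereditarily Bassian, then the socle of M is finitely generated. -/

import Mathlib

/-!
Decompose the socle as the sum of an independent set `s` of simple submodules. If `s` is
finite, the socle is finitely generated. Every simple module is a quotient of `R/J(R)`, hence,
as `R/J(R)` is semisimple and cyclic, isomorphic to one of its finitely many simple summands.
So if `s` were infinite, infinitely many members of `s` would be isomorphic to one simple `S`,
and `M` would contain `S^(ω)`, which is not Bassian: the shift embeds `S^(ω)` into its quotient
by the first coordinate.
-/

/-- A module `M` is *Bassian* if every monomorphism `M → M/N` forces `N = 0`. -/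
def IsBassian (R : Type*) [Ring R] (M : Type*) [AddCommGroup M] [Module R M] : Prop :=
  ∀ N : Submodule R M, (∃ f : M →ₗ[R] M ⧸ N, Function.Injective f) → N = ⊥

/-- A module `M` is *super Bassian* if every quotient of `M` is Bassian. -/
def IsSuperBassian (R : Type*) [Ring R] (M : Type*) [AddCommGroup M] [Module R M] : Prop :=
  ∀ K : Submodule R M, IsBassian R (M ⧸ K)

/-- A module `M` is *hereditarily Bassian* if every submodule of `M` is Bassian. -/
def IsHereditarilyBassian (R : Type*) [Ring R] (M : Type*) [AddCommGroup M] [Module R M] :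
    Prop :=
  ∀ N : Submodule R M, IsBassian R N

/-- The *socle* of a module: the sum of all its simple submodules, i.e. the supremum of
the atoms of its submodule lattice. -/
def Socle (R : Type*) [Ring R] (M : Type*) [AddCommGroup M] [Module R M] : Submodule R M :=
  sSup {N : Submodule R M | IsAtom N}

section Bassian

variable {R : Type*} [Ring R] {M N : Type*} [AddCommGroup M] [Module R M]
  [AddCommGroup N] [Module R N]

theorem IsBassian.of_linearEquiv (e : M ≃ₗ[R] N) (hM : IsBassian R M) : IsBassian R N := by
  rintro K ⟨f, hf⟩
  have hK : (K.comap e.toLinearMap).map e.toLinearMap = K :=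
    Submodule.map_comap_eq_of_surjective e.surjective K
  let q : (M ⧸ K.comap e.toLinearMap) ≃ₗ[R] N ⧸ K := Submodule.Quotient.equiv _ K e hK
  have hbot : K.comap e.toLinearMap = ⊥ :=
    hM _ ⟨q.symm.toLinearMap ∘ₗ f ∘ₗ e.toLinearMap, q.symm.injective.comp (hf.comp e.injective)⟩
  rw [← hK, hbot, Submodule.map_bot]

theorem not_isBassian_finsupp_nat (S : Type*) [AddCommGroup S] [Module R S] [Nontrivial S] :
    ¬ IsBassian R (ℕ →₀ S) := by
  intro hS
  let K := LinearMap.range (Finsupp.lsingle 0 : S →ₗ[R] ℕ →₀ S)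
  have hshift : Function.Injective (K.mkQ ∘ₗ Finsupp.lmapDomain S R Nat.succ) := by
    rw [injective_iff_map_eq_zero]
    rintro x hx
    obtain ⟨s, hs⟩ := (Submodule.Quotient.mk_eq_zero K).1 hx
    ext n
    rw [← Finsupp.mapDomain_apply Nat.succ_injective x n]
    simpa using (DFunLike.congr_fun hs n.succ).symm
  obtain ⟨s, hs⟩ := exists_ne (0 : S)
  have hK : Finsupp.single 0 s ∈ K := ⟨s, rfl⟩
  rw [hS K ⟨_, hshift⟩, Submodule.mem_bot, Finsupp.single_eq_zero] at hK
  exact hs hK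

theorem IsHereditarilyBassian.not_injective_finsupp_nat (h : IsHereditarilyBassian R M)
    {S : Type*} [AddCommGroup S] [Module R S] [Nontrivial S] (F : (ℕ →₀ S) →ₗ[R] M) :
    ¬ Function.Injective F := fun hF =>
  not_isBassian_finsupp_nat S <|
    (h (LinearMap.range F)).of_linearEquiv (LinearEquiv.ofInjective F hF).symm

end Bassian

section SimpleModule

universe u v w

variable {R : Type u} [Ring R]

variable (R) in
theorem IsSimpleModule.exists_surjective_quotient_jacobson (T : Type v) [AddCommGroup T]
    [Module R T] [IsSimpleModule R T] :
    ∃ f : (R ⧸ Ring.jacobson R) →ₗ[R] T, Function.Surjective f := by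
  have := IsSimpleModule.nontrivial R T
  obtain ⟨x, hx⟩ := exists_ne (0 : T)
  have := IsSimpleModule.ker_toSpanSingleton_isMaximal R hx
  refine ⟨(Ring.jacobson R).liftQ (LinearMap.toSpanSingleton R T x)
    (Ring.jacobson_le_of_isMaximal _), ?_⟩
  rw [← LinearMap.range_eq_top, Submodule.range_liftQ, LinearMap.range_eq_top]
  exact IsSimpleModule.toSpanSingleton_surjective R hx

theorem IsSemisimpleModule.exists_fin_simple_linearEquiv_of_ne_zero (X : Type v)
    [AddCommGroup X] [Module R X] [IsSemisimpleModule R X] [Module.Finite R X] :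
    ∃ (n : ℕ) (S : Fin n → Submodule R X), (∀ i, IsSimpleModule R (S i)) ∧
      ∀ (T : Type w) [AddCommGroup T] [Module R T] [IsSimpleModule R T] (f : X →ₗ[R] T),
        f ≠ 0 → ∃ i, Nonempty (S i ≃ₗ[R] T) := by
  obtain ⟨n, S, e, hS⟩ := IsSemisimpleModule.exists_linearEquiv_fin_dfinsupp R X
  refine ⟨n, S, hS, fun T _ _ _ f hf => ?_⟩
  obtain ⟨i, hi⟩ : ∃ i, f ∘ₗ e.symm.toLinearMap ∘ₗ DFinsupp.lsingle i ≠ 0 := by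
    by_contra! h
    refine hf ((LinearMap.cancel_right e.symm.surjective).1 ?_)
    exact DFinsupp.lhom_ext' fun i => by simpa [LinearMap.comp_assoc] using h i
  exact ⟨i, ⟨LinearEquiv.ofBijective _ (LinearMap.bijective_of_ne_zero hi)⟩⟩

theorem exists_fin_forall_isSimpleModule_linearEquiv
    (hss : IsSemisimpleModule R (R ⧸ Ring.jacobson R)) :
    ∃ (n : ℕ) (S : Fin n → Submodule R (R ⧸ Ring.jacobson R)), (∀ i, IsSimpleModule R (S i)) ∧
      ∀ (T : Type v) [AddCommGroup T] [Module R T] [IsSimpleModule R T],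
        ∃ i, Nonempty (S i ≃ₗ[R] T) := by
  obtain ⟨n, S, hS, hT⟩ :=
    IsSemisimpleModule.exists_fin_simple_linearEquiv_of_ne_zero.{u, u, v} (R := R)
      (R ⧸ Ring.jacobson R)
  refine ⟨n, S, hS, fun T _ _ _ => ?_⟩
  obtain ⟨f, hf⟩ := IsSimpleModule.exists_surjective_quotient_jacobson R T
  have := IsSimpleModule.nontrivial R T
  exact hT T f (LinearMap.ne_zero_of_surjective hf)

end SimpleModule

theorem Infinite.exists_nat_embedding_fiber {α ι : Type*} [Infinite α] [Finite ι] (c : α → ι) :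
    ∃ i, ∃ f : ℕ ↪ α, ∀ k, c (f k) = i := by
  obtain ⟨i, hi⟩ := Finite.exists_infinite_fiber c
  exact ⟨i, (Infinite.natEmbedding _).trans (Function.Embedding.subtype _), fun k =>
    (Infinite.natEmbedding (c ⁻¹' {i}) k).2⟩

section Submodule

variable {R : Type*} [Ring R] {M : Type*} [AddCommGroup M] [Module R M]

theorem Submodule.fg_of_isAtom {a : Submodule R M} (ha : IsAtom a) : a.FG :=
  have := isSimpleModule_iff_isAtom.2 ha
  Module.Finite.iff_fg.1 inferInstance

variable (R M) in
theorem exists_sSupIndep_atoms_sSup_eq_socle :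
    ∃ s : Set (Submodule R M), sSupIndep s ∧ sSup s = Socle R M ∧ ∀ ⦃a⦄, a ∈ s → IsAtom a := by
  refine exists_sSupIndep_of_sSup_atoms _ (congrArg sSup (Set.ext fun a => ?_))
  exact and_iff_right_of_imp fun ha => le_sSup ha

theorem iSupIndep.exists_injective_finsupp {ι : Type*} {A : ι → Submodule R M}
    (hA : iSupIndep A) {S : Type*} [AddCommGroup S] [Module R S] (e : ∀ i, S ≃ₗ[R] A i) :
    ∃ F : (ι →₀ S) →ₗ[R] M, Function.Injective F := by
  classical
  let e' : (ι →₀ S) ≃ₗ[R] Π₀ i, A i :=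
    (finsuppLequivDFinsupp R).trans (DFinsupp.mapRange.linearEquiv e)
  exact ⟨DFinsupp.lsum ℕ (fun i => (A i).subtype) ∘ₗ e'.toLinearMap,
    hA.dfinsupp_lsum_injective.comp e'.injective⟩

end Submodule

theorem socle_fg_of_hereditarilyBassian_general (R : Type*) [Ring R] (M : Type*) [AddCommGroup M]
    [Module R M]
    (hss : IsSemisimpleModule R (R ⧸ (⊥ : Ideal R).jacobson))
    (h : IsHereditarilyBassian R M) :
    (Socle R M).FG := by
  rw [Ideal.jacobson_bot] at hss
  obtain ⟨n, S, hS, hclass⟩ := exists_fin_forall_isSimpleModule_linearEquiv hss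
  obtain ⟨s, hs_ind, hs_sup, hs_atoms⟩ := exists_sSupIndep_atoms_sSup_eq_socle R M
  rcases s.finite_or_infinite with hfin | hinf
  · have := hfin.to_subtype
    rw [← hs_sup, sSup_eq_iSup']
    exact Submodule.fg_iSup _ fun a => Submodule.fg_of_isAtom (hs_atoms a.2)
  have := hinf.to_subtype
  choose c hc using fun a : s =>
    have := isSimpleModule_iff_isAtom.2 (hs_atoms a.2)
    hclass a
  obtain ⟨i, f, hf⟩ := Infinite.exists_nat_embedding_fiber c
  have hA : iSupIndep fun k => (f k : Submodule R M) :=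
    ((sSupIndep_iff s).1 hs_ind).comp f.injective
  obtain ⟨F, hF⟩ := hA.exists_injective_finsupp fun k => (hf k ▸ hc (f k)).some
  have := IsSimpleModule.nontrivial R (S i)
  exact (h.not_injective_finsupp_nat F hF).elim

/-- Over a semiperfect ring (`R/J(R)` semisimple and idempotents lift modulo `J(R)`),
the socle of a hereditarily Bassian module is finitely generated. -/
theorem socle_fg_of_hereditarilyBassian (R : Type*) [Ring R] (M : Type*) [AddCommGroup M]
    [Module R M]
    (hss : IsSemisimpleModule R (R ⧸ (⊥ : Ideal R).jacobson))
    (hlift : ∀ a : R, a * a - a ∈ (⊥ : Ideal R).jacobson →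
      ∃ e : R, e * e = e ∧ e - a ∈ (⊥ : Ideal R).jacobson)
    (h : IsHereditarilyBassian R M) :
    (Socle R M).FG :=
  socle_fg_of_hereditarilyBassian_general R M hss h
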